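/- arXiv:2504.20926 — 9 statements merged into one kernel-verified Lean document; each statement's English description precedes it below -/
import Mathlib

section
/- For every privacy budget ε > 0, the sequence m₁(N) = ⌊(√(N²·e^ε + ¼(1 − e^ε)²) − (N − e^ε/2 + 1/2)) / (e^ε − 1)⌋ satisfies lim_{N→∞} m₁(N)/N = 1/(e^{ε/2} + 1). -/
open Real Filter Topology

/-! The numerator of `m₁(N)` is `√(N²e^ε + c) − N + O(1) = (e^{ε/2} − 1) N + o(N)`, so before
rounding `m₁(N)/N → (e^{ε/2} − 1)/(e^ε − 1) = 1/(e^{ε/2} + 1)`; the floor moves the count by less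
than one, which is invisible after dividing by `N`. -/

theorem tendsto_floor_div_atTop {f : ℝ → ℝ} {L : ℝ}
    (h : Tendsto (fun x => f x / x) atTop (𝓝 L)) :
    Tendsto (fun x => (⌊f x⌋ : ℝ) / x) atTop (𝓝 L) := by
  have hlow : Tendsto (fun x => (f x - 1) / x) atTop (𝓝 L) := by
    simpa only [sub_div, sub_zero, id] using h.sub (tendsto_const_nhds.div_atTop tendsto_id)
  refine tendsto_of_tendsto_of_tendsto_of_le_of_le' hlow h ?_ ?_ <;>
    filter_upwards [eventually_gt_atTop 0] with x hx
  · exact div_le_div_of_nonneg_right (Int.sub_one_lt_floor (f x)).le hx.le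
  · exact div_le_div_of_nonneg_right (Int.floor_le (f x)) hx.le

theorem tendsto_sqrt_sq_mul_add_div_atTop (a c : ℝ) :
    Tendsto (fun x : ℝ => √(x ^ 2 * a + c) / x) atTop (𝓝 √a) := by
  have hlim : Tendsto (fun x : ℝ => √(a + c / x ^ 2)) atTop (𝓝 √a) := by
    have := (tendsto_const_nhds (x := a)).add
      ((tendsto_const_nhds (x := c)).div_atTop (tendsto_pow_atTop two_ne_zero))
    simpa only [add_zero] using this.sqrt
  refine hlim.congr' ?_
  filter_upwards [eventually_gt_atTop 0] with x hx
  rw [show x ^ 2 * a + c = x ^ 2 * (a + c / x ^ 2) by field_simp, sqrt_mul (sq_nonneg x),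
    sqrt_sq hx.le, mul_div_cancel_left₀ _ hx.ne']

theorem tendsto_sqrt_sq_mul_add_sub_div_atTop (a b c d : ℝ) :
    Tendsto (fun x : ℝ => (√(x ^ 2 * a + c) - (x - b)) / d / x) atTop (𝓝 ((√a - 1) / d)) := by
  have h := (((tendsto_sqrt_sq_mul_add_div_atTop a c).sub (tendsto_const_nhds (x := 1))).add
    ((tendsto_const_nhds (x := b)).div_atTop tendsto_id)).div_const d
  rw [add_zero] at h
  refine h.congr' ?_
  filter_upwards [eventually_gt_atTop 0] with x hx
  simp only [id]
  field_simp
  ring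

theorem sqrt_sub_one_div_sub_one {t : ℝ} (ht : 0 ≤ t) (ht1 : t ≠ 1) :
    (√t - 1) / (t - 1) = 1 / (√t + 1) := by
  rw [div_eq_div_iff (sub_ne_zero.2 ht1) (by positivity)]
  linear_combination sq_sqrt ht

/-- For every privacy budget ε > 0, the extreme-point candidate count
`m₁(N) = ⌊(√(N²·e^ε + ¼(1 − e^ε)²) − (N − e^ε/2 + 1/2)) / (e^ε − 1)⌋`
satisfies `lim_{N→∞} m₁(N)/N = 1/(e^{ε/2} + 1)`. -/
theorem brr_m1_limit (ε : ℝ) (hε : 0 < ε) :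
    Tendsto (fun N : ℕ =>
        ((⌊(Real.sqrt ((N : ℝ) ^ 2 * Real.exp ε + (1 / 4) * (1 - Real.exp ε) ^ 2)
            - ((N : ℝ) - Real.exp ε / 2 + 1 / 2)) / (Real.exp ε - 1)⌋ : ℝ) / (N : ℝ)))
      atTop (nhds (1 / (Real.exp (ε / 2) + 1))) := by
  have h := tendsto_sqrt_sq_mul_add_sub_div_atTop (exp ε) (exp ε / 2 - 1 / 2)
    ((1 / 4) * (1 - exp ε) ^ 2) (exp ε - 1)
  rw [sqrt_sub_one_div_sub_one (exp_nonneg ε) (one_lt_exp_iff.2 hε).ne', ← exp_half] at h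
  have hfloor := (tendsto_floor_div_atTop h).comp tendsto_natCast_atTop_atTop
  refine hfloor.congr fun N => ?_
  simp only [Function.comp_apply, sub_add]
end

section
/- For every real ε ≥ 1 and every integer N ≥ 2, the inequality √(N²·e^ε + ¼(1 − e^ε)²) − (N − e^ε/2 + 1/2) < √(e^ε·(N² − 1) + 1) − (N − e^ε + 1) holds; consequently, dividing both sides by e^ε − 1 > 0, the right root i₁ᵣ of the extreme-point quadratic z₁(i) = ((e^ε−1)/2)i² + (N − e^ε/2 + 1/2)i − N²/2 − N/2 is strictly smaller than the right root i₃ᵣ of the odd-N middle-point quadratic z₃(i) = ((e^ε−1)/4)i² + ((N − e^ε + 1)/2)i + ((e^ε−1) − 2N − N² + 1)/4. -/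
open Real

/-! Write `E = e^ε` and `B = E (N² − 1) + 1` for the middle radicand. The extreme radicand is
`B + (E − 1) + ((E − 1)/2)²`, and squaring `√B + (E − 1)/2` gives `B + (E − 1)√B + ((E − 1)/2)²`,
so the comparison of the two numerators comes down to `√B > 1`, i.e. `N² > 1`. -/

lemma sqrt_add_add_half_sq_lt {b c : ℝ} (hb : 1 < b) (hc : 0 < c) :
    √(b + c + (c / 2) ^ 2) < √b + c / 2 := by
  have h_sqrt_b : 1 < √b := by simpa using Real.sqrt_lt_sqrt zero_le_one hb
  rw [Real.sqrt_lt' (by positivity), add_sq, Real.sq_sqrt (by linarith)]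
  nlinarith

/-- For ε ≥ 1 and integer N ≥ 2, the numerator of the right root of the extreme-point
quadratic is strictly smaller than that of the odd-N middle-point quadratic; dividing
by `e^ε − 1 > 0`, the right root `i₁ᵣ` is strictly smaller than the right root `i₃ᵣ`. -/
theorem brr_extreme_root_lt_middle_root (ε : ℝ) (hε : 1 ≤ ε) (N : ℕ) (hN : 2 ≤ N) :
    (Real.sqrt ((N : ℝ) ^ 2 * Real.exp ε + (1 / 4) * (1 - Real.exp ε) ^ 2)
        - ((N : ℝ) - Real.exp ε / 2 + 1 / 2)
      < Real.sqrt (Real.exp ε * ((N : ℝ) ^ 2 - 1) + 1) - ((N : ℝ) - Real.exp ε + 1)) ∧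
    ((Real.sqrt ((N : ℝ) ^ 2 * Real.exp ε + (1 / 4) * (1 - Real.exp ε) ^ 2)
        - ((N : ℝ) - Real.exp ε / 2 + 1 / 2)) / (Real.exp ε - 1)
      < (Real.sqrt (Real.exp ε * ((N : ℝ) ^ 2 - 1) + 1) - ((N : ℝ) - Real.exp ε + 1))
          / (Real.exp ε - 1)) := by
  set E := Real.exp ε
  have hE : 1 < E := Real.one_lt_exp_iff.mpr (by linarith)
  have hN' : (2 : ℝ) ≤ N := by exact_mod_cast hN
  have h_radicand : (N : ℝ) ^ 2 * E + (1 / 4) * (1 - E) ^ 2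
      = (E * ((N : ℝ) ^ 2 - 1) + 1) + (E - 1) + ((E - 1) / 2) ^ 2 := by ring
  have h_middle : 1 < E * ((N : ℝ) ^ 2 - 1) + 1 := by
    have := mul_pos (by linarith : 0 < E) (by nlinarith : 0 < (N : ℝ) ^ 2 - 1)
    linarith
  have h_sqrt := sqrt_add_add_half_sq_lt h_middle (sub_pos.mpr hE)
  rw [← h_radicand] at h_sqrt
  have h_num : √((N : ℝ) ^ 2 * E + (1 / 4) * (1 - E) ^ 2) - ((N : ℝ) - E / 2 + 1 / 2)
      < √(E * ((N : ℝ) ^ 2 - 1) + 1) - ((N : ℝ) - E + 1) := by linarith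
  exact ⟨h_num, div_lt_div_of_pos_right h_num (by linarith)⟩
end

section
/- Given a privacy budget ε > 0, an integer N ≥ 2, and real quality losses 0 ≤ λ₁ ≤ λ₂ ≤ ⋯ ≤ λ_N, define for 1 ≤ m ≤ N the bipartite expected error Q(m) = (e^ε·Σ_{i=1}^m λ_i + Σ_{i=m+1}^N λ_i)/(m·e^ε + N − m). If an integer m with 1 ≤ m ≤ N satisfies λ_{i+1} ≤ Q(i) for every i with 1 ≤ i < m, then Q(m) ≤ Q(1). In particular, the local expected error of the BRR mechanism with such an m is no more than the local expected error Q(1) of the GRR mechanism. -/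
open Real Finset

/-- `Q(m)` for the weight `w` in place of `e^ε`. -/
noncomputable def bipartiteError (w : ℝ) (lam : ℕ → ℝ) (N m : ℕ) : ℝ :=
  (w * ∑ i ∈ Icc 1 m, lam i + ∑ i ∈ Icc (m + 1) N, lam i) / (m * w + N - m)

lemma add_mul_div_add_le_div {A D c l : ℝ} (hD : 0 < D) (hc : 0 ≤ c) (hl : l ≤ A / D) :
    (A + c * l) / (D + c) ≤ A / D := by
  rw [div_le_div_iff₀ (by linarith) hD]
  nlinarith [(le_div_iff₀ hD).mp hl]

section bipartiteError

variable {w : ℝ} {lam : ℕ → ℝ} {N : ℕ}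

lemma bipartiteError_succ {m : ℕ} (hmN : m < N) :
    bipartiteError w lam N (m + 1) =
      ((w * ∑ i ∈ Icc 1 m, lam i + ∑ i ∈ Icc (m + 1) N, lam i) + (w - 1) * lam (m + 1)) /
        ((m * w + N - m) + (w - 1)) := by
  have h_head :
      ∑ i ∈ Icc (m + 1) N, lam i = lam (m + 1) + ∑ i ∈ Icc (m + 1 + 1) N, lam i := by
    rw [Icc_add_one_left_eq_Ioc (m + 1), add_sum_Ioc_eq_sum_Icc hmN]
  rw [bipartiteError, sum_Icc_succ_top (by omega), h_head]
  push_cast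
  ring

/-- `Q(m + 1)` is a weighted mediant of `Q(m)` and `λ_{m+1}`, so it lies between them. -/
lemma bipartiteError_succ_le (hw : 1 ≤ w) {m : ℕ} (hm : 1 ≤ m) (hmN : m < N)
    (hlam : lam (m + 1) ≤ bipartiteError w lam N m) :
    bipartiteError w lam N (m + 1) ≤ bipartiteError w lam N m := by
  have hD : 0 < (m : ℝ) * w + N - m := by
    have : (m : ℝ) < N := by exact_mod_cast hmN
    have : (1 : ℝ) ≤ m := by exact_mod_cast hm
    nlinarith
  rw [bipartiteError_succ hmN]
  exact add_mul_div_add_le_div hD (by linarith) hlam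

lemma bipartiteError_le_bipartiteError_one (hw : 1 ≤ w) {m : ℕ} (hm : 1 ≤ m) (hmN : m ≤ N)
    (hstep : ∀ i, 1 ≤ i → i < m → lam (i + 1) ≤ bipartiteError w lam N i) :
    bipartiteError w lam N m ≤ bipartiteError w lam N 1 := by
  induction m, hm using Nat.le_induction with
  | base => exact le_rfl
  | succ n hn ih =>
    calc bipartiteError w lam N (n + 1)
        ≤ bipartiteError w lam N n := bipartiteError_succ_le hw hn hmN (hstep n hn n.lt_succ_self)
      _ ≤ bipartiteError w lam N 1 :=
          ih (by omega) fun i hi hin => hstep i hi (Nat.lt_succ_of_lt hin)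

end bipartiteError

theorem brr_le_grr_local_general (ε : ℝ) (hε : 0 < ε) (N : ℕ)
    (lam : ℕ → ℝ)
    (Q : ℕ → ℝ)
    (hQ : ∀ m, Q m =
      (Real.exp ε * ∑ i ∈ Finset.Icc 1 m, lam i + ∑ i ∈ Finset.Icc (m + 1) N, lam i)
        / (m * Real.exp ε + N - m))
    (m : ℕ) (hm1 : 1 ≤ m) (hmN : m ≤ N)
    (hstep : ∀ i, 1 ≤ i → i < m → lam (i + 1) ≤ Q i) :
    Q m ≤ Q 1 := by
  have hQ_eq : Q = bipartiteError (Real.exp ε) lam N := funext hQ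
  subst hQ_eq
  exact bipartiteError_le_bipartiteError_one (Real.one_le_exp hε.le) hm1 hmN hstep

/-- If an integer `m` with `1 ≤ m ≤ N` satisfies `λ_{i+1} ≤ Q(i)` for every `1 ≤ i < m`,
then the bipartite expected error `Q(m) = (e^ε·Σ_{i≤m} λ_i + Σ_{i>m} λ_i)/(m·e^ε + N − m)`
satisfies `Q(m) ≤ Q(1)`: the BRR local expected error is no more than that of GRR. -/
theorem brr_le_grr_local (ε : ℝ) (hε : 0 < ε) (N : ℕ) (hN : 2 ≤ N)
    (lam : ℕ → ℝ) (h0 : 0 ≤ lam 1)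
    (hmono : ∀ i, 1 ≤ i → i < N → lam i ≤ lam (i + 1))
    (Q : ℕ → ℝ)
    (hQ : ∀ m, Q m =
      (Real.exp ε * ∑ i ∈ Finset.Icc 1 m, lam i + ∑ i ∈ Finset.Icc (m + 1) N, lam i)
        / (m * Real.exp ε + N - m))
    (m : ℕ) (hm1 : 1 ≤ m) (hmN : m ≤ N)
    (hstep : ∀ i, 1 ≤ i → i < m → lam (i + 1) ≤ Q i) :
    Q m ≤ Q 1 :=
  brr_le_grr_local_general ε hε N lam Q hQ m hm1 hmN hstep
end

section
/- Fix a privacy budget ε > 0 and a sequence of integers m(N) with 1 ≤ m(N) ≤ N for all N and lim_{N→∞} m(N)/N = 1/(e^{ε/2} + 1). Then lim_{N→∞} max_{1 ≤ k ≤ N} Q_BRR(k, N, m(N)) / Q_GRR(k, N) = 2/(e^{ε/2} + 1). -/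
open Real Filter Finset

/-- Sum of the `m` smallest elements of the multiset `{|j − k| : j = 1,…,N}`. -/
def Tm (k N m : ℕ) : ℤ :=
  (((((Finset.Icc 1 N).val.map (fun j => |(j : ℤ) - (k : ℤ)|))).sort (· ≤ ·)).take m).sum

/-- Local expected error of GRR at priori point `k` over `{1,…,N}`. -/
noncomputable def QGRR (ε : ℝ) (k N : ℕ) : ℝ :=
  (∑ j ∈ Finset.Icc 1 N, |(j : ℝ) - (k : ℝ)|) / (Real.exp ε + N - 1)

/-- Local expected error of BRR with parameter `m` at priori point `k` over `{1,…,N}`. -/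
noncomputable def QBRR (ε : ℝ) (k N m : ℕ) : ℝ :=
  (Real.exp ε * (Tm k N m : ℝ)
      + ((∑ j ∈ Finset.Icc 1 N, |(j : ℝ) - (k : ℝ)|) - (Tm k N m : ℝ)))
    / (m * Real.exp ε + N - m)

/-!
Write `S_k = ∑ |j - k|` and `T_k = T_m(k, N)`. Then `Q_BRR / Q_GRR` equals
`(e^ε + N - 1) / (m e^ε + N - m) * (1 + (e^ε - 1) T_k / S_k)`, which is increasing in `T_k / S_k`.
At `k = 1` the distances are `0, 1, …, N - 1`, so `T_1 / S_1 = m(m - 1) / (N(N - 1))`. For every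
`k`, `T_k` is at most the sum of the distances over any `m` consecutive integers around `k`;
pushing this window against the nearer end of `{1, …, N}`, or centring it on `k`, gives
`T_k / S_k ≤ (m / (N - 1))²`. Both bounds tend to `γ²` with `γ = 1 / (e^{ε/2} + 1)`, and
`(1 + (e^ε - 1) γ²) / (1 + (e^ε - 1) γ) = 2 / (e^{ε/2} + 1)`.
-/

open Topology

theorem List.Pairwise.sum_take_card_le {α : Type*} [AddCommMonoid α] [PartialOrder α]
    [IsOrderedAddMonoid α] {l : List α} (hl : l.Pairwise (· ≤ ·)) {t : Multiset α}
    (ht : t ≤ l) : (l.take (Multiset.card t)).sum ≤ t.sum := by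
  classical
  induction l generalizing t with
  | nil => simp [Multiset.le_zero.mp ht]
  | cons x l ih =>
    rcases Multiset.empty_or_exists_mem t with rfl | ⟨z, hz⟩
    · simp
    rw [List.pairwise_cons] at hl
    obtain ⟨y, hy, hxy, hle⟩ : ∃ y ∈ t, x ≤ y ∧ t.erase y ≤ l := by
      by_cases hx : x ∈ t
      · exact ⟨x, hx, le_rfl, by simpa using Multiset.erase_le_erase x ht⟩
      · rw [← Multiset.cons_coe, Multiset.le_cons_of_notMem hx] at ht
        exact ⟨z, hz, hl.1 z (Multiset.mem_of_le ht hz), (Multiset.erase_le z t).trans ht⟩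
    rw [← Multiset.card_erase_add_one hy, List.take_succ_cons, List.sum_cons,
      ← Multiset.sum_erase hy]
    exact add_le_add hxy (ih hl.2 hle)

theorem Multiset.sum_take_card_sort_le {α : Type*} [AddCommMonoid α] [LinearOrder α]
    [IsOrderedAddMonoid α] {s t : Multiset α} (ht : t ≤ s) :
    ((s.sort (· ≤ ·)).take (Multiset.card t)).sum ≤ t.sum :=
  (s.pairwise_sort _).sum_take_card_le (by rwa [Multiset.sort_eq])

theorem Tm_le_sum_of_subset {k N : ℕ} {J : Finset ℕ} (hJ : J ⊆ Icc 1 N) :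
    Tm k N J.card ≤ ∑ j ∈ J, |(j : ℤ) - k| := by
  rw [Tm]
  simpa using Multiset.sum_take_card_sort_le
    (Multiset.map_le_map (f := fun j : ℕ => |(j : ℤ) - k|) (Finset.val_le_iff.mpr hJ))

theorem Tm_one_mul_two {N m : ℕ} (hm : m ≤ N) : Tm 1 N m * 2 = m * (m - 1) := by
  have hdist : (Icc 1 N).val.map (fun j : ℕ => |(j : ℤ) - 1|) =
      ((List.range N).map ((↑) : ℕ → ℤ) : Multiset ℤ) := by
    rw [Nat.Icc_eq_range', Multiset.map_coe, List.range'_eq_map_range, List.map_map]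
    congr 1
    exact List.map_congr_left fun j _ => by simp
  have hsorted : ((List.range N).map ((↑) : ℕ → ℤ)).Pairwise (· ≤ ·) := by
    simpa [List.pairwise_map] using List.pairwise_le_range
  -- `Tm` casts `Icc 1 N` to a multiset of integers through the monad structure of `Multiset`
  simp only [Tm, Multiset.pure_def, Multiset.bind_def, Multiset.bind_singleton, Nat.cast_one,
    Multiset.map_map, Function.comp_def]
  rw [hdist, Multiset.coe_sort, List.mergeSort_eq_self (r := fun a b : ℤ => a ≤ b) hsorted,
    ← List.map_take, List.take_range, min_eq_left hm]
  have hsum : ((List.range m).map ((↑) : ℕ → ℤ)).sum = ∑ i ∈ range m, (i : ℤ) := by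
    simp [Finset.sum_eq_multiset_sum, Multiset.range]
  rw [hsum, ← Nat.cast_sum, ← Nat.cast_ofNat, ← Nat.cast_mul, Finset.sum_range_id_mul_two]
  rcases m with _ | m <;> simp

theorem sum_Icc_abs_sub_mul_two {R : Type*} [CommRing R] [LinearOrder R] [IsStrictOrderedRing R]
    {k p : ℕ} (hp : p ≤ k) (q : ℕ) :
    (∑ j ∈ Icc (k - p) (k + q), |(j : R) - k|) * 2 = p * (p + 1) + q * (q + 1) := by
  induction q with
  | zero =>
    induction p with
    | zero => simp
    | succ p ih =>
      rw [← insert_Icc_add_one_left_eq_Icc (by omega), sum_insert (by simp),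
        show k - (p + 1) + 1 = k - p by omega, add_mul, ih (by omega), Nat.cast_sub hp,
        show ((k : R) - ((p + 1 : ℕ) : R)) - k = -((p : R) + 1) by push_cast; ring, abs_neg,
        abs_of_nonneg (by positivity)]
      push_cast
      ring
  | succ q ih =>
    rw [← add_assoc, sum_Icc_succ_top (by omega), add_mul, ih]
    push_cast
    rw [show (k : R) + q + 1 - k = q + 1 by ring, abs_of_nonneg (by positivity)]
    ring

theorem sum_Icc_one_abs_sub_mul_two {k N : ℕ} (hk : 1 ≤ k) (hkN : k ≤ N) :
    (∑ j ∈ Icc 1 N, |(j : ℝ) - k|) * 2 = (k - 1) * k + (N - k) * (N - k + 1) := by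
  have h := sum_Icc_abs_sub_mul_two (R := ℝ) (Nat.sub_le k 1) (N - k)
  rw [Nat.sub_sub_self hk, Nat.add_sub_cancel' hkN] at h
  rw [h]
  push_cast [hk, hkN]
  ring

theorem sum_Icc_one_abs_sub_pos {k N : ℕ} (hk : 1 ≤ k) (hkN : k ≤ N) (hN : 2 ≤ N) :
    0 < ∑ j ∈ Icc 1 N, |(j : ℝ) - k| := by
  have h := sum_Icc_one_abs_sub_mul_two hk hkN
  have hk' : (1 : ℝ) ≤ k := by exact_mod_cast hk
  have hkN' : (k : ℝ) ≤ N := by exact_mod_cast hkN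
  have hN' : (2 : ℝ) ≤ N := by exact_mod_cast hN
  nlinarith

/-- `p` and `q` are the numbers of points to the left and to the right of `k = a + 1` in a window
of `m` consecutive integers inside `{1, …, a + b + 1}`. -/
theorem exists_balanced_split {a b m : ℕ} (hm : 1 ≤ m) (hmab : m ≤ a + b + 1) :
    ∃ p q, p ≤ a ∧ q ≤ b ∧ p + q + 1 = m ∧
      (p * (p + 1) + q * (q + 1)) * (a + b) ^ 2 ≤ m ^ 2 * (a * (a + 1) + b * (b + 1)) := by
  wlog hab : a ≤ b generalizing a b
  · obtain ⟨q, p, hqb, hpa, hqp, h⟩ := this (a := b) (b := a) (by omega) (by omega)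
    exact ⟨p, q, hpa, hqb, by omega, by rw [add_comm a b, add_comm (a * _)]; linarith⟩
  by_cases ha : 2 * a ≤ m
  · refine ⟨a, m - 1 - a, le_rfl, by omega, by omega, ?_⟩
    zify [show a ≤ m - 1 by omega, hm]
    have hx : (0 : ℤ) ≤ a := by positivity
    have hmn : (m : ℤ) ≤ a + b + 1 := by exact_mod_cast hmab
    have hxm : 2 * (a : ℤ) ≤ m := by exact_mod_cast ha
    have hxn : (a : ℤ) ≤ b := by exact_mod_cast hab
    nlinarith [mul_nonneg hx (sub_nonneg.mpr hmn), sq_nonneg ((a : ℤ) + b - m),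
      mul_nonneg (mul_nonneg hx hx) (sub_nonneg.mpr hmn),
      mul_nonneg (sub_nonneg.mpr hxm) (sub_nonneg.mpr hxn)]
  · obtain ⟨p, q, rfl, hqp⟩ : ∃ p q, p + q + 1 = m ∧ (q = p ∨ q + 1 = p) :=
      ⟨m / 2, m - 1 - m / 2, by omega, by omega⟩
    refine ⟨p, q, by omega, by omega, rfl, ?_⟩
    have hpq : 2 * (p * (p + 1) + q * (q + 1)) ≤ (p + q + 1) ^ 2 := by
      rcases hqp with rfl | rfl <;> nlinarith
    have hab2 : (a + b) ^ 2 ≤ 2 * (a * (a + 1) + b * (b + 1)) := by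
      nlinarith [sq_nonneg ((a : ℤ) - b)]
    nlinarith

theorem Tm_mul_sq_le {k N m : ℕ} (hk : 1 ≤ k) (hkN : k ≤ N) (hm : 1 ≤ m) (hmN : m ≤ N) :
    (Tm k N m : ℝ) * (N - 1) ^ 2 ≤ m ^ 2 * ∑ j ∈ Icc 1 N, |(j : ℝ) - k| := by
  obtain ⟨p, q, hpk, hqN, rfl, hsplit⟩ := exists_balanced_split (a := k - 1) (b := N - k) hm
    (by omega)
  have hT := Tm_le_sum_of_subset (k := k) (N := N) (J := Icc (k - p) (k + q)) (by
    intro j; simp only [mem_Icc]; omega)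
  rw [Nat.card_Icc, show k + q + 1 - (k - p) = p + q + 1 by omega] at hT
  have hW := sum_Icc_abs_sub_mul_two (R := ℤ) (k := k) (by omega : p ≤ k) q
  have hT2 : (Tm k N (p + q + 1) : ℝ) * 2 ≤ p * (p + 1) + q * (q + 1) := by
    exact_mod_cast (by linarith : Tm k N (p + q + 1) * 2 ≤ p * (p + 1) + q * (q + 1))
  have hsplit' : ((p * (p + 1) + q * (q + 1)) * ((k - 1 : ℕ) + (N - k : ℕ)) ^ 2 : ℝ) ≤
      ((p + q + 1 : ℕ) : ℝ) ^ 2 *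
        ((k - 1 : ℕ) * ((k - 1 : ℕ) + 1) + (N - k : ℕ) * ((N - k : ℕ) + 1)) := by
    exact_mod_cast hsplit
  have hS := sum_Icc_one_abs_sub_mul_two hk hkN
  push_cast [hk, hkN] at hsplit' ⊢
  nlinarith [mul_le_mul_of_nonneg_right hT2 (sq_nonneg ((N : ℝ) - 1))]

/-- The ratio `Q_BRR / Q_GRR` as a function of `t = T_m(k, N) / ∑ |j - k|`. -/
noncomputable def brrGrrRatio (ε : ℝ) (N m : ℕ) (t : ℝ) : ℝ :=
  (exp ε + N - 1) / (m * exp ε + N - m) * (1 + (exp ε - 1) * t)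

theorem QBRR_div_QGRR {ε : ℝ} {k N m : ℕ} (hS : ∑ j ∈ Icc 1 N, |(j : ℝ) - k| ≠ 0) :
    QBRR ε k N m / QGRR ε k N = brrGrrRatio ε N m (Tm k N m / ∑ j ∈ Icc 1 N, |(j : ℝ) - k|) := by
  rw [QBRR, QGRR, brrGrrRatio, div_div_div_eq, mul_comm, ← div_mul_div_comm]
  congr 1
  field_simp
  ring

theorem QBRR_div_QGRR_one {ε : ℝ} {N m : ℕ} (hN : 2 ≤ N) (hmN : m ≤ N) :
    QBRR ε 1 N m / QGRR ε 1 N = brrGrrRatio ε N m (m / N * ((m - 1) / (N - 1))) := by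
  have hS := sum_Icc_one_abs_sub_mul_two le_rfl (by omega : 1 ≤ N)
  have hS0 := sum_Icc_one_abs_sub_pos le_rfl (by omega : 1 ≤ N) hN
  have hT : (Tm 1 N m : ℝ) * 2 = m * (m - 1) := by exact_mod_cast Tm_one_mul_two hmN
  have hN' : (2 : ℝ) ≤ N := by exact_mod_cast hN
  rw [QBRR_div_QGRR hS0.ne', div_mul_div_comm]
  congr 1
  rw [div_eq_div_iff hS0.ne' (by nlinarith)]
  push_cast at hS ⊢
  linear_combination (N * (N - 1) : ℝ) * hT / 2 - (m * (m - 1) : ℝ) * hS / 2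

theorem QBRR_div_QGRR_le {ε : ℝ} (hε : 0 < ε) {k N m : ℕ} (hk : 1 ≤ k) (hkN : k ≤ N)
    (hN : 2 ≤ N) (hm : 1 ≤ m) (hmN : m ≤ N) :
    QBRR ε k N m / QGRR ε k N ≤ brrGrrRatio ε N m ((m / (N - 1)) ^ 2) := by
  have hS := sum_Icc_one_abs_sub_pos hk hkN hN
  have he : 1 < exp ε := one_lt_exp_iff.mpr hε
  have hN' : (2 : ℝ) ≤ N := by exact_mod_cast hN
  have hmN' : (m : ℝ) ≤ N := by exact_mod_cast hmN
  rw [QBRR_div_QGRR hS.ne']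
  unfold brrGrrRatio
  gcongr ?_ * (1 + _ * ?_)
  · exact div_nonneg (by linarith) (by nlinarith)
  · rw [div_pow, div_le_div_iff₀ hS (by nlinarith)]
    exact Tm_mul_sq_le hk hkN hm hmN

theorem tendsto_add_div_add {f : ℕ → ℝ} {γ : ℝ} (hf : Tendsto (fun N : ℕ => f N / N) atTop (𝓝 γ))
    (a b : ℝ) : Tendsto (fun N : ℕ => (f N + a) / (N + b)) atTop (𝓝 γ) := by
  have h0 := tendsto_one_div_atTop_nhds_zero_nat (𝕜 := ℝ)
  have h := (hf.add (h0.const_mul a)).div (tendsto_const_nhds (x := (1 : ℝ)).add (h0.const_mul b))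
    (by simp)
  simp only [mul_zero, add_zero, div_one] at h
  refine h.congr' ?_
  filter_upwards [eventually_ne_atTop 0] with N hN
  have hN' : (N : ℝ) ≠ 0 := Nat.cast_ne_zero.mpr hN
  rw [Pi.div_apply, ← div_div_div_cancel_right₀ hN' (f N + a) (N + b)]
  congr 1 <;> field_simp

theorem tendsto_brrGrrRatio {ε : ℝ} {m : ℕ → ℕ} {w : ℕ → ℝ}
    (hm : Tendsto (fun N : ℕ => (m N : ℝ) / N) atTop (𝓝 (1 / (exp (ε / 2) + 1))))
    (hw : Tendsto w atTop (𝓝 ((1 / (exp (ε / 2) + 1)) ^ 2))) :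
    Tendsto (fun N : ℕ => brrGrrRatio ε N (m N) (w N)) atTop (𝓝 (2 / (exp (ε / 2) + 1))) := by
  set s := exp (ε / 2) with hs
  have hε : exp ε = s ^ 2 := by rw [hs, ← exp_nat_mul]; ring_nf
  have hs0 : 0 < s := exp_pos _
  have hden : 1 + (exp ε - 1) * (1 / (s + 1)) = s := by
    rw [hε]
    field_simp
    ring
  have h0 := tendsto_one_div_atTop_nhds_zero_nat (𝕜 := ℝ)
  have hA := ((h0.const_mul (exp ε - 1)).const_add 1).div ((hm.const_mul (exp ε - 1)).const_add 1)
    (by rw [hden]; exact hs0.ne')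
  have h := hA.mul ((hw.const_mul (exp ε - 1)).const_add 1)
  convert h.congr' ?_ using 2
  · rw [hden, hε]
    field_simp
    ring
  · filter_upwards [eventually_ne_atTop 0] with N hN
    have hN' : (N : ℝ) ≠ 0 := Nat.cast_ne_zero.mpr hN
    rw [brrGrrRatio, Pi.div_apply, ← div_div_div_cancel_right₀ hN' (exp ε + N - 1)]
    congr 2 <;> field_simp <;> ring

theorem eventually_pos_and_lt_of_tendsto_div {m : ℕ → ℕ} {γ : ℝ}
    (hlim : Tendsto (fun N : ℕ => (m N : ℝ) / N) atTop (𝓝 γ)) (h0 : 0 < γ) (h1 : γ < 1) :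
    ∀ᶠ N in atTop, 0 < m N ∧ m N < N := by
  filter_upwards [hlim.eventually (lt_mem_nhds h0), hlim.eventually (gt_mem_nhds h1),
    eventually_gt_atTop 0] with N hpos hlt hN
  have hN' : (0 : ℝ) < N := by exact_mod_cast hN
  rw [div_pos_iff_of_pos_right hN'] at hpos
  rw [div_lt_one hN'] at hlt
  exact ⟨by exact_mod_cast hpos, by exact_mod_cast hlt⟩

theorem brr_grr_sup_ratio_limit_general (ε : ℝ) (hε : 0 < ε) (m : ℕ → ℕ)
    (hlim : Tendsto (fun N : ℕ => (m N : ℝ) / (N : ℝ)) atTop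
      (nhds (1 / (Real.exp (ε / 2) + 1)))) :
    Tendsto (fun N : ℕ =>
        if h : (Finset.Icc 1 N).Nonempty then
          (Finset.Icc 1 N).sup' h (fun k => QBRR ε k N (m N) / QGRR ε k N)
        else 0)
      atTop (nhds (2 / (Real.exp (ε / 2) + 1))) := by
  have hγ1 : 1 / (exp (ε / 2) + 1) < 1 := by
    rw [div_lt_one (by positivity)]
    linarith [exp_pos (ε / 2)]
  have hm : ∀ᶠ N in atTop, 2 ≤ N ∧ 0 < m N ∧ m N < N :=
    (eventually_ge_atTop 2).and (eventually_pos_and_lt_of_tendsto_div hlim (by positivity) hγ1)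
  refine tendsto_of_tendsto_of_tendsto_of_le_of_le'
    (tendsto_brrGrrRatio (w := fun N => m N / N * ((m N - 1) / (N - 1))) hlim ?_)
    (tendsto_brrGrrRatio (w := fun N => (m N / (N - 1)) ^ 2) hlim ?_) ?_ ?_
  · simpa [sq, sub_eq_add_neg] using hlim.mul (tendsto_add_div_add hlim (-1) (-1))
  · simpa [sub_eq_add_neg] using (tendsto_add_div_add hlim 0 (-1)).pow 2
  · filter_upwards [hm] with N ⟨hN, _, hmN⟩
    have h1 : 1 ∈ Icc 1 N := mem_Icc.mpr ⟨le_rfl, by omega⟩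
    rw [dif_pos ⟨1, h1⟩, ← QBRR_div_QGRR_one hN hmN.le]
    exact le_sup' (fun k => QBRR ε k N (m N) / QGRR ε k N) h1
  · filter_upwards [hm] with N ⟨hN, hm0, hmN⟩
    rw [dif_pos ⟨1, mem_Icc.mpr ⟨le_rfl, by omega⟩⟩]
    exact sup'_le _ _ fun k hk =>
      QBRR_div_QGRR_le hε (mem_Icc.mp hk).1 (mem_Icc.mp hk).2 hN hm0 hmN.le

/-- If `m(N)/N → 1/(e^{ε/2}+1)`, then the maximum over `1 ≤ k ≤ N` of the local
expected-error ratio of BRR to GRR tends to `2/(e^{ε/2} + 1)` as `N → ∞`. -/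
theorem brr_grr_sup_ratio_limit (ε : ℝ) (hε : 0 < ε) (m : ℕ → ℕ)
    (hm : ∀ N, 1 ≤ N → 1 ≤ m N ∧ m N ≤ N)
    (hlim : Tendsto (fun N : ℕ => (m N : ℝ) / (N : ℝ)) atTop
      (nhds (1 / (Real.exp (ε / 2) + 1)))) :
    Tendsto (fun N : ℕ =>
        if h : (Finset.Icc 1 N).Nonempty then
          (Finset.Icc 1 N).sup' h (fun k => QBRR ε k N (m N) / QGRR ε k N)
        else 0)
      atTop (nhds (2 / (Real.exp (ε / 2) + 1))) :=
  brr_grr_sup_ratio_limit_general ε hε m hlim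
end

section
/- For every ε > 0, the difference between 2/(e^{ε/2} + 1) and e^{ε/2} − ((e^{ε/2} − 1)/(e^{ε/2} + 1))·(√(e^ε + 2e^{ε/2} + 2) + 1) equals ((e^{ε/2} − 1)/(e^{ε/2} + 1)) · (√(e^ε + 2e^{ε/2} + 2) + e^{ε/2} + 1)^{−1}, and this quantity is strictly less than (1/2)·(e^{ε/2} + 1)^{−1}. -/
open Real

/-! With `x = e^{ε/2}` and `s = √(x² + 2x + 2) = √((x + 1)² + 1)`, the gap simplifies to
`(x - 1)/(x + 1) · (s - (x + 1))`, and rationalising `s - (x + 1) = (s + x + 1)⁻¹` gives the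
identity. The bound is then `2(x - 1) < s + x + 1`, which holds because `s > x + 1`. -/

lemma sqrt_sq_add_one_sub_self (a : ℝ) : √(a ^ 2 + 1) - a = (√(a ^ 2 + 1) + a)⁻¹ := by
  have habs : |a| < √(a ^ 2 + 1) := by
    rw [← sqrt_sq_eq_abs]
    exact sqrt_lt_sqrt (sq_nonneg a) (lt_add_one _)
  have hpos : 0 < √(a ^ 2 + 1) + a := by linarith [neg_abs_le a]
  refine eq_inv_of_mul_eq_one_left ?_
  nlinarith [sq_sqrt (by positivity : (0 : ℝ) ≤ a ^ 2 + 1)]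

lemma lt_sqrt_sq_add_two_mul_add_two {x : ℝ} (hx : 0 ≤ x + 1) : x + 1 < √(x ^ 2 + 2 * x + 2) := by
  rw [lt_sqrt hx]
  linarith

lemma div_sub_sub_div_mul_sqrt_eq {x : ℝ} (hx : x + 1 ≠ 0) :
    2 / (x + 1) - (x - (x - 1) / (x + 1) * (√(x ^ 2 + 2 * x + 2) + 1)) =
      (x - 1) / (x + 1) * (√(x ^ 2 + 2 * x + 2) + x + 1)⁻¹ := by
  have hrat : √(x ^ 2 + 2 * x + 2) - (x + 1) = (√(x ^ 2 + 2 * x + 2) + x + 1)⁻¹ := by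
    have := sqrt_sq_add_one_sub_self (x + 1)
    rwa [show (x + 1) ^ 2 + 1 = x ^ 2 + 2 * x + 2 by ring, ← add_assoc] at this
  rw [← hrat]
  field_simp
  ring

lemma div_mul_inv_sqrt_lt {x : ℝ} (hx : 0 < x + 1) :
    (x - 1) / (x + 1) * (√(x ^ 2 + 2 * x + 2) + x + 1)⁻¹ < 1 / 2 * (x + 1)⁻¹ := by
  have hs := lt_sqrt_sq_add_two_mul_add_two hx.le
  have hden : 0 < √(x ^ 2 + 2 * x + 2) + x + 1 := by linarith
  have hhalf : (x - 1) / (√(x ^ 2 + 2 * x + 2) + x + 1) < 1 / 2 := by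
    rw [div_lt_iff₀ hden]
    linarith
  calc (x - 1) / (x + 1) * (√(x ^ 2 + 2 * x + 2) + x + 1)⁻¹
      = (x - 1) / (√(x ^ 2 + 2 * x + 2) + x + 1) * (x + 1)⁻¹ := by ring
    _ < 1 / 2 * (x + 1)⁻¹ := by gcongr

theorem brr_grr_ratio_bounds_gap_general (ε : ℝ) :
    (2 / (Real.exp (ε / 2) + 1)
        - (Real.exp (ε / 2)
            - (Real.exp (ε / 2) - 1) / (Real.exp (ε / 2) + 1)
                * (Real.sqrt (Real.exp ε + 2 * Real.exp (ε / 2) + 2) + 1))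
      = (Real.exp (ε / 2) - 1) / (Real.exp (ε / 2) + 1)
          * (Real.sqrt (Real.exp ε + 2 * Real.exp (ε / 2) + 2) + Real.exp (ε / 2) + 1)⁻¹) ∧
    ((Real.exp (ε / 2) - 1) / (Real.exp (ε / 2) + 1)
        * (Real.sqrt (Real.exp ε + 2 * Real.exp (ε / 2) + 2) + Real.exp (ε / 2) + 1)⁻¹
      < (1 / 2) * (Real.exp (ε / 2) + 1)⁻¹) := by
  have hsq : Real.exp ε = Real.exp (ε / 2) ^ 2 := by rw [← exp_nat_mul]; ring_nf
  have hpos : 0 < Real.exp (ε / 2) + 1 := by positivity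
  rw [hsq]
  exact ⟨div_sub_sub_div_mul_sqrt_eq hpos.ne', div_mul_inv_sqrt_lt hpos⟩

/-- The gap between the asymptotic upper bound `2/(e^{ε/2}+1)` and the asymptotic lower
bound `e^{ε/2} − ((e^{ε/2}−1)/(e^{ε/2}+1))·(√(e^ε + 2e^{ε/2} + 2) + 1)` of the local
expected-error ratio of BRR to GRR equals
`((e^{ε/2} − 1)/(e^{ε/2} + 1))·(√(e^ε + 2e^{ε/2} + 2) + e^{ε/2} + 1)⁻¹`,
and is strictly less than `(1/2)·(e^{ε/2} + 1)⁻¹`. -/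
theorem brr_grr_ratio_bounds_gap (ε : ℝ) (hε : 0 < ε) :
    (2 / (Real.exp (ε / 2) + 1)
        - (Real.exp (ε / 2)
            - (Real.exp (ε / 2) - 1) / (Real.exp (ε / 2) + 1)
                * (Real.sqrt (Real.exp ε + 2 * Real.exp (ε / 2) + 2) + 1))
      = (Real.exp (ε / 2) - 1) / (Real.exp (ε / 2) + 1)
          * (Real.sqrt (Real.exp ε + 2 * Real.exp (ε / 2) + 2) + Real.exp (ε / 2) + 1)⁻¹) ∧
    ((Real.exp (ε / 2) - 1) / (Real.exp (ε / 2) + 1)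
        * (Real.sqrt (Real.exp ε + 2 * Real.exp (ε / 2) + 2) + Real.exp (ε / 2) + 1)⁻¹
      < (1 / 2) * (Real.exp (ε / 2) + 1)⁻¹) :=
  brr_grr_ratio_bounds_gap_general ε
end

section
/- Fix a privacy budget ε > 0 and a sequence of integers m(N) with 1 ≤ m(N) ≤ N for all N and lim_{N→∞} m(N)/N = 1/(e^{ε/2} + 1). Define the global expected errors Q_g^BRR(N) = (1/N)·Σ_{k=1}^N Q_BRR(k, N, m(N)) and Q_g^GRR(N) = (1/N)·Σ_{k=1}^N Q_GRR(k, N). Then lim_{N→∞} Q_g^BRR(N) / Q_g^GRR(N) = (7·e^{ε/2} + 9) / (4·(e^{ε/2} + 1)²). -/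
open Real Filter Finset

/-!
For `1 ≤ k ≤ N` the distances `|j - k|` are `0`, `1, …, k - 1` and `1, …, N - k`; sorted, they read
`0, 1, 1, 2, 2, …, a, a, a + 1, a + 2, …` with `a = min (k - 1) (N - k)`, so `T_m(k, N)` is the sum
of the first `m` terms of an explicit sequence. Summing over `k` gives
`Σ_k T_m(k, N) = N m² / 4 + m³ / 12 + O(N²)` for `m ≤ N`, and the case `m = N` gives
`Σ_k Σ_j |j - k| = N³ / 3 + O(N²)`. The denominators of `Q_BRR` and `Q_GRR` do not depend on `k`,
so after dividing by `N³` the ratio of the global errors is a rational expression in `m / N`,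
`1 / N` and these two normalized sums, whose limit follows from `m / N → 1 / (e^{ε/2} + 1)`.
-/

open Topology

/-- The `i`-th smallest (from `0`) of `0, 1, 1, 2, 2, …, a, a, a + 1, a + 2, …`. -/
def sortedDist (a i : ℕ) : ℕ := (i + 1) / 2 + (i / 2 - a)

lemma monotone_sortedDist (a : ℕ) : Monotone (sortedDist a) := fun i j hij => by
  unfold sortedDist; omega

/-- The distances from a point of a row with `a` points on one side and `b` on the other. -/
def distMultiset (a b : ℕ) : Multiset ℕ :=
  0 ::ₘ ((Multiset.range a).map Nat.succ + (Multiset.range b).map Nat.succ)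

lemma distMultiset_comm (a b : ℕ) : distMultiset a b = distMultiset b a := by
  rw [distMultiset, distMultiset, add_comm]

lemma Multiset.range_succ_eq_cons_map (n : ℕ) :
    Multiset.range (n + 1) = 0 ::ₘ (Multiset.range n).map Nat.succ :=
  congrArg _ List.range_succ_eq_map

lemma Multiset.map_range_reflect (n : ℕ) :
    (Multiset.range n).map (fun i => n - 1 - i) = Multiset.range n := by
  rw [← Finset.range_val, ← Finset.image_val_of_injOn, Finset.range_image_pred_top_sub]
  intro x hx y hy h
  simp only [Finset.mem_coe, Finset.mem_range] at hx hy
  simp only at h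
  omega

lemma Finset.Icc_one_val (N : ℕ) : (Icc 1 N).val = (Multiset.range N).map (· + 1) := by
  have : Icc 1 N = (range N).map (addRightEmbedding 1) := by
    ext j
    simp only [mem_Icc, mem_map, mem_range, addRightEmbedding_apply]
    constructor
    · intro h; exact ⟨j - 1, by omega, by omega⟩
    · rintro ⟨i, hi, rfl⟩; omega
  rw [this, Finset.map_val]
  rfl

lemma map_abs_sub_Icc_eq_distMultiset {k N : ℕ} (hk : 1 ≤ k) (hkN : k ≤ N) :
    (Icc 1 N).val.map (fun j => |(j : ℤ) - k|) = (distMultiset (k - 1) (N - k)).map (↑) := by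
  obtain ⟨a, rfl⟩ : ∃ a, k = a + 1 := ⟨k - 1, by omega⟩
  obtain ⟨b, rfl⟩ : ∃ b, N = a + 1 + b := ⟨N - (a + 1), by omega⟩
  have left : (Multiset.range (a + 1)).map (fun i => |((i + 1 : ℕ) : ℤ) - (a + 1 : ℕ)|)
      = ((Multiset.range (a + 1)).map (fun i => a + 1 - 1 - i)).map (↑) := by
    rw [Multiset.map_map]
    refine Multiset.map_congr rfl fun i hi => ?_
    rw [Multiset.mem_range] at hi
    rw [Function.comp_apply, abs_of_nonpos (by omega)]
    omega
  have right : (Multiset.range b).map (fun i => |((a + 1 + i + 1 : ℕ) : ℤ) - (a + 1 : ℕ)|)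
      = ((Multiset.range b).map Nat.succ).map (↑) := by
    rw [Multiset.map_map]
    refine Multiset.map_congr rfl fun i _ => ?_
    rw [Function.comp_apply, abs_of_nonneg (by omega)]
    omega
  simp only [bind_pure_comp, Multiset.fmap_def]
  rw [Finset.Icc_one_val, Multiset.map_map, Multiset.map_map, Multiset.range_add, Multiset.map_add,
    Multiset.map_map]
  simp only [Function.comp_def]
  rw [left, right, Multiset.map_range_reflect, Multiset.range_succ_eq_cons_map, distMultiset,
    add_tsub_cancel_right, add_tsub_cancel_left, ← Multiset.map_add, Multiset.cons_add]

lemma map_sortedDist_range_of_le {a b : ℕ} (hab : a ≤ b) :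
    (Multiset.range (a + b + 1)).map (sortedDist a) = distMultiset a b := by
  induction b, hab using Nat.le_induction with
  | base =>
    induction a with
    | zero => rfl
    | succ a ih =>
      have hprefix : (Multiset.range (a + a + 1)).map (sortedDist (a + 1))
          = (Multiset.range (a + a + 1)).map (sortedDist a) :=
        Multiset.map_congr rfl fun i hi => by
          rw [Multiset.mem_range] at hi
          unfold sortedDist; omega
      have h1 : sortedDist (a + 1) (a + a + 1) = a + 1 := by unfold sortedDist; omega
      have h2 : sortedDist (a + 1) (a + a + 1 + 1) = a + 1 := by unfold sortedDist; omega
      rw [show a + 1 + (a + 1) + 1 = a + a + 1 + 1 + 1 by ring, Multiset.range_succ,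
        Multiset.range_succ, Multiset.map_cons, Multiset.map_cons, hprefix, ih, h1, h2,
        distMultiset, distMultiset, Multiset.range_succ, Multiset.map_cons, Multiset.cons_add,
        Multiset.add_cons]
      simp only [Multiset.cons_swap, Nat.succ_eq_add_one]
  | succ b hab ih =>
    have h : sortedDist a (a + b + 1) = b + 1 := by unfold sortedDist; omega
    rw [← add_assoc, Multiset.range_succ, Multiset.map_cons, ih, h, distMultiset, distMultiset,
      Multiset.range_succ, Multiset.map_cons, Multiset.add_cons, Multiset.cons_swap]

lemma map_sortedDist_range (a b : ℕ) :
    (Multiset.range (a + b + 1)).map (sortedDist (min a b)) = distMultiset a b := by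
  rcases le_total a b with h | h
  · rw [min_eq_left h, map_sortedDist_range_of_le h]
  · rw [min_eq_right h, add_comm a, map_sortedDist_range_of_le h, distMultiset_comm]

theorem Tm_eq_sum_sortedDist {k N m : ℕ} (hk : 1 ≤ k) (hkN : k ≤ N) (hmN : m ≤ N) :
    Tm k N m = ∑ i ∈ range m, (sortedDist (min (k - 1) (N - k)) i : ℤ) := by
  have hsorted : (Icc 1 N).val.map (fun j => |(j : ℤ) - k|)
      = ((List.range N).map (fun i => (sortedDist (min (k - 1) (N - k)) i : ℤ)) : Multiset ℤ) := by
    rw [map_abs_sub_Icc_eq_distMultiset hk hkN, ← map_sortedDist_range, Multiset.map_map,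
      ← Multiset.map_coe]
    congr 2
    omega
  have hpairwise : ((List.range N).map (fun i => (sortedDist (min (k - 1) (N - k)) i : ℤ))).Pairwise
      (· ≤ ·) := by
    rw [List.pairwise_map]
    exact List.pairwise_lt_range.imp fun h => by
      exact_mod_cast monotone_sortedDist _ h.le
  rw [Tm, hsorted, Multiset.coe_sort, List.mergeSort_eq_self _ hpairwise, ← List.map_take,
    List.take_range, min_eq_left hmN, Finset.sum, Finset.range_val, Multiset.range,
    Multiset.map_coe, Multiset.sum_coe]

lemma Finset.sum_Icc_one_eq_sum_range {M : Type*} [AddCommMonoid M] (f : ℕ → M) (N : ℕ) :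
    ∑ k ∈ Icc 1 N, f k = ∑ j ∈ range N, f (j + 1) := by
  rw [Finset.sum, Finset.Icc_one_val, Multiset.map_map]
  rfl

lemma sum_range_tsub_eq_sum_range {x N : ℕ} (hxN : x ≤ N) :
    ∑ j ∈ range N, (x - j) = ∑ j ∈ range (x + 1), j := by
  induction N, hxN using Nat.le_induction with
  | base =>
    rw [sum_range_succ', ← sum_range_reflect]
    exact sum_congr rfl fun j hj => by rw [mem_range] at hj; omega
  | succ N hxN ih => rw [sum_range_succ, ih, Nat.sub_eq_zero_of_le (by omega), add_zero]

theorem sum_sortedDist_min {N i : ℕ} (hiN : i ≤ N) :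
    ∑ k ∈ Icc 1 N, sortedDist (min (k - 1) (N - k)) i
      = N * ((i + 1) / 2) + i / 2 * (i / 2 + 1) := by
  -- `(k - 1) + (N - k) ≥ 2 (i / 2) - 1`, so at most one of the two truncated differences is nonzero
  have hsplit : ∀ k ∈ Icc 1 N,
      sortedDist (min (k - 1) (N - k)) i
        = (i + 1) / 2 + ((i / 2 - (k - 1)) + (i / 2 - (N - k))) := by
    intro k hk
    rw [mem_Icc] at hk
    unfold sortedDist
    omega
  have hleft : ∑ k ∈ Icc 1 N, (i / 2 - (k - 1)) = ∑ j ∈ range N, (i / 2 - j) := by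
    simp only [sum_Icc_one_eq_sum_range, Nat.add_sub_cancel]
  have hright : ∑ k ∈ Icc 1 N, (i / 2 - (N - k)) = ∑ j ∈ range N, (i / 2 - j) := by
    rw [sum_Icc_one_eq_sum_range, ← sum_range_reflect]
    exact sum_congr rfl fun j hj => by rw [mem_range] at hj; congr 1; omega
  have htri : ∑ j ∈ range N, (i / 2 - j) + ∑ j ∈ range N, (i / 2 - j) = i / 2 * (i / 2 + 1) := by
    rw [← two_mul, mul_comm, sum_range_tsub_eq_sum_range (by omega), sum_range_id_mul_two,
      Nat.add_sub_cancel, mul_comm]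
  rw [sum_congr rfl hsplit, sum_add_distrib, sum_add_distrib, sum_const, Nat.card_Icc,
    Nat.add_sub_cancel, smul_eq_mul, hleft, hright, htri]

/-- The subtracted term is the increment of `n ↦ N n² / 4 + n³ / 12` from `i` to `i + 1`. -/
theorem abs_sum_sortedDist_min_sub_le {N i : ℕ} (hiN : i < N) :
    |(∑ k ∈ Icc 1 N, sortedDist (min (k - 1) (N - k)) i : ℝ)
      - (N * (2 * i + 1) / 4 + (3 * i ^ 2 + 3 * i + 1) / 12)| ≤ (N : ℝ) := by
  rw [← Nat.cast_sum, sum_sortedDist_min hiN.le]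
  obtain ⟨t, rfl | rfl⟩ := Nat.even_or_odd' i
  · rw [show (2 * t + 1) / 2 = t by omega, show 2 * t / 2 = t by omega]
    have : (2 * t : ℝ) + 1 ≤ N := by exact_mod_cast hiN
    push_cast
    rw [abs_le]; constructor <;> nlinarith
  · rw [show (2 * t + 1 + 1) / 2 = t + 1 by omega, show (2 * t + 1) / 2 = t by omega]
    have : (2 * t : ℝ) + 2 ≤ N := by exact_mod_cast hiN
    push_cast
    rw [abs_le]; constructor <;> nlinarith

theorem abs_sum_Tm_sub_le {N m : ℕ} (hmN : m ≤ N) :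
    |∑ k ∈ Icc 1 N, (Tm k N m : ℝ) - (N * m ^ 2 / 4 + m ^ 3 / 12)| ≤ (N : ℝ) ^ 2 := by
  set f : ℕ → ℝ := fun n => N * n ^ 2 / 4 + n ^ 3 / 12
  have hT : ∑ k ∈ Icc 1 N, (Tm k N m : ℝ)
      = ∑ i ∈ range m, (∑ k ∈ Icc 1 N, sortedDist (min (k - 1) (N - k)) i : ℝ) := by
    rw [sum_comm]
    refine sum_congr rfl fun k hk => ?_
    rw [mem_Icc] at hk
    rw [Tm_eq_sum_sortedDist hk.1 hk.2 hmN]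
    push_cast
    rfl
  have hf : f m = ∑ i ∈ range m, (f (i + 1) - f i) := by
    rw [sum_range_sub]
    simp [f]
  calc |∑ k ∈ Icc 1 N, (Tm k N m : ℝ) - f m|
      = |∑ i ∈ range m, ((∑ k ∈ Icc 1 N, sortedDist (min (k - 1) (N - k)) i : ℝ)
          - (f (i + 1) - f i))| := by rw [hT, hf, ← sum_sub_distrib]
    _ ≤ ∑ i ∈ range m, (N : ℝ) := by
      refine (abs_sum_le_sum_abs _ _).trans (sum_le_sum fun i hi => ?_)
      rw [mem_range] at hi
      have hstep : f (i + 1) - f i = N * (2 * i + 1) / 4 + (3 * i ^ 2 + 3 * i + 1) / 12 := by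
        simp only [f]; push_cast; ring
      rw [hstep]
      exact abs_sum_sortedDist_min_sub_le (by omega)
    _ ≤ N ^ 2 := by
      rw [sum_const, card_range, nsmul_eq_mul, sq]
      gcongr

theorem Tm_self_eq_sum_abs (k N : ℕ) : Tm k N N = ∑ j ∈ Icc 1 N, |(j : ℤ) - k| := by
  rw [Tm, List.take_of_length_le (by simp), ← Multiset.sum_coe, Multiset.sort_eq]
  simp only [bind_pure_comp, Multiset.fmap_def, Multiset.map_map]
  rfl

theorem tendsto_sum_Tm_div_cube {m : ℕ → ℕ} {c : ℝ} (hmN : ∀ᶠ N in atTop, m N ≤ N)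
    (hlim : Tendsto (fun N : ℕ => (m N : ℝ) / N) atTop (𝓝 c)) :
    Tendsto (fun N : ℕ => (∑ k ∈ Icc 1 N, (Tm k N (m N) : ℝ)) / (N : ℝ) ^ 3) atTop
      (𝓝 (c ^ 2 / 4 + c ^ 3 / 12)) := by
  have hmain : Tendsto (fun N : ℕ => ((m N : ℝ) / N) ^ 2 / 4 + ((m N : ℝ) / N) ^ 3 / 12) atTop
      (𝓝 (c ^ 2 / 4 + c ^ 3 / 12)) :=
    ((hlim.pow 2).div_const 4).add ((hlim.pow 3).div_const 12)
  have herr : Tendsto (fun N : ℕ => (∑ k ∈ Icc 1 N, (Tm k N (m N) : ℝ)) / (N : ℝ) ^ 3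
      - (((m N : ℝ) / N) ^ 2 / 4 + ((m N : ℝ) / N) ^ 3 / 12)) atTop (𝓝 0) := by
    refine squeeze_zero_norm' ?_ tendsto_one_div_atTop_nhds_zero_nat
    filter_upwards [hmN, eventually_gt_atTop 0] with N hmN hN
    have hN : (0 : ℝ) < N := by exact_mod_cast hN
    have hcube : (∑ k ∈ Icc 1 N, (Tm k N (m N) : ℝ)) / (N : ℝ) ^ 3
          - (((m N : ℝ) / N) ^ 2 / 4 + ((m N : ℝ) / N) ^ 3 / 12)
        = (∑ k ∈ Icc 1 N, (Tm k N (m N) : ℝ) - (N * m N ^ 2 / 4 + m N ^ 3 / 12)) / (N : ℝ) ^ 3 := by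
      field_simp
    rw [Real.norm_eq_abs, hcube, abs_div, abs_of_pos (pow_pos hN 3), div_le_iff₀ (by positivity)]
    calc _ ≤ (N : ℝ) ^ 2 := abs_sum_Tm_sub_le hmN
      _ = 1 / N * N ^ 3 := by field_simp
  simpa using herr.add hmain

theorem tendsto_sum_sum_abs_sub_div_cube :
    Tendsto (fun N : ℕ => (∑ k ∈ Icc 1 N, ∑ j ∈ Icc 1 N, |(j : ℝ) - k|) / (N : ℝ) ^ 3) atTop
      (𝓝 (1 / 3)) := by
  have hone : Tendsto (fun N : ℕ => (N : ℝ) / N) atTop (𝓝 1) :=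
    tendsto_const_nhds.congr' <| (eventually_gt_atTop 0).mono fun N hN =>
      (div_self (Nat.cast_ne_zero.mpr hN.ne')).symm
  convert tendsto_sum_Tm_div_cube (m := id) (Eventually.of_forall le_refl) hone using 2
  · simp only [id, Tm_self_eq_sum_abs]
    push_cast
    rfl
  · norm_num

theorem sum_QBRR_eq (ε : ℝ) (N m : ℕ) :
    ∑ k ∈ Icc 1 N, QBRR ε k N m = ((exp ε - 1) * ∑ k ∈ Icc 1 N, (Tm k N m : ℝ)
      + ∑ k ∈ Icc 1 N, ∑ j ∈ Icc 1 N, |(j : ℝ) - k|) / (m * exp ε + N - m) := by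
  rw [mul_sum, ← sum_add_distrib, sum_div]
  exact sum_congr rfl fun k _ => by rw [QBRR]; ring

theorem sum_QGRR_eq (ε : ℝ) (N : ℕ) :
    ∑ k ∈ Icc 1 N, QGRR ε k N = (∑ k ∈ Icc 1 N, ∑ j ∈ Icc 1 N, |(j : ℝ) - k|) / (exp ε + N - 1) :=
  (sum_div _ _ _).symm

lemma tendsto_add_natCast_div {u : ℕ → ℝ} {x : ℝ} (h : Tendsto (fun N : ℕ => u N / N) atTop (𝓝 x)) :
    Tendsto (fun N : ℕ => (u N + N) / N) atTop (𝓝 (x + 1)) :=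
  (h.add_const 1).congr' <| (eventually_gt_atTop 0).mono fun N hN => by
    show u N / N + 1 = (u N + N) / N
    rw [add_div, div_self (Nat.cast_ne_zero.mpr hN.ne')]

theorem tendsto_GRR_denominator_div (ε : ℝ) :
    Tendsto (fun N : ℕ => (exp ε + N - 1) / N) atTop (𝓝 1) := by
  convert tendsto_add_natCast_div (tendsto_const_div_atTop_nhds_zero_nat (exp ε - 1)) using 2
  · ring
  · simp

theorem tendsto_BRR_denominator_div (ε : ℝ) {m : ℕ → ℕ} {c : ℝ}
    (hlim : Tendsto (fun N : ℕ => (m N : ℝ) / N) atTop (𝓝 c)) :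
    Tendsto (fun N : ℕ => (m N * exp ε + N - m N) / N) atTop (𝓝 ((exp ε - 1) * c + 1)) := by
  convert tendsto_add_natCast_div (u := fun N => (exp ε - 1) * m N)
    (by simpa only [mul_div_assoc] using hlim.const_mul (exp ε - 1)) using 2
  ring

theorem global_ratio_eq {ε : ℝ} {N m : ℕ} (hN : 1 ≤ N) (hmN : m ≤ N)
    (hS : 0 < ∑ k ∈ Icc 1 N, ∑ j ∈ Icc 1 N, |(j : ℝ) - k|) :
    ((1 / (N : ℝ)) * ∑ k ∈ Icc 1 N, QBRR ε k N m) / ((1 / (N : ℝ)) * ∑ k ∈ Icc 1 N, QGRR ε k N)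
      = ((exp ε - 1) * ((∑ k ∈ Icc 1 N, (Tm k N m : ℝ)) / (N : ℝ) ^ 3)
          + (∑ k ∈ Icc 1 N, ∑ j ∈ Icc 1 N, |(j : ℝ) - k|) / (N : ℝ) ^ 3) * ((exp ε + N - 1) / N)
        / ((∑ k ∈ Icc 1 N, ∑ j ∈ Icc 1 N, |(j : ℝ) - k|) / (N : ℝ) ^ 3
          * ((m * exp ε + N - m) / N)) := by
  have hN : (1 : ℝ) ≤ N := Nat.one_le_cast.mpr hN
  have hmN : (m : ℝ) ≤ N := by exact_mod_cast hmN
  have hB : 0 < (m : ℝ) * exp ε + N - m := by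
    rcases le_total 1 (exp ε) with h | h <;> nlinarith [exp_pos ε]
  have hG : 0 < exp ε + N - 1 := by linarith [exp_pos ε]
  rw [sum_QBRR_eq, sum_QGRR_eq]
  field_simp

theorem brr_grr_global_ratio_limit_general (ε : ℝ) (m : ℕ → ℕ)
    (hm : ∀ N, 1 ≤ N → 1 ≤ m N ∧ m N ≤ N)
    (hlim : Tendsto (fun N : ℕ => (m N : ℝ) / (N : ℝ)) atTop
      (nhds (1 / (Real.exp (ε / 2) + 1)))) :
    Tendsto (fun N : ℕ =>
        ((1 / (N : ℝ)) * ∑ k ∈ Finset.Icc 1 N, QBRR ε k N (m N))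
          / ((1 / (N : ℝ)) * ∑ k ∈ Finset.Icc 1 N, QGRR ε k N))
      atTop (nhds ((7 * Real.exp (ε / 2) + 9) / (4 * (Real.exp (ε / 2) + 1) ^ 2))) := by
  set E := exp (ε / 2) with hE
  have hE0 : 0 < E := exp_pos _
  have hexp : exp ε = E ^ 2 := by rw [hE, sq, ← exp_add, add_halves]
  have hmN : ∀ᶠ N in atTop, m N ≤ N := (eventually_ge_atTop 1).mono fun N hN => (hm N hN).2
  have hσ := tendsto_sum_sum_abs_sub_div_cube
  have hB := tendsto_BRR_denominator_div ε hlim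
  rw [show (exp ε - 1) * (1 / (E + 1)) + 1 = E by rw [hexp]; field_simp; ring] at hB
  have key := ((((tendsto_sum_Tm_div_cube hmN hlim).const_mul (exp ε - 1)).add hσ).mul
    (tendsto_GRR_denominator_div ε)).div (hσ.mul hB) (by positivity)
  rw [show ((exp ε - 1) * ((1 / (E + 1)) ^ 2 / 4 + (1 / (E + 1)) ^ 3 / 12) + 1 / 3) * 1
      / (1 / 3 * E) = (7 * E + 9) / (4 * (E + 1) ^ 2) by rw [hexp]; field_simp; ring] at key
  refine key.congr' ?_
  filter_upwards [hσ.eventually_const_lt (by norm_num : (0 : ℝ) < 1 / 3), hmN,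
    eventually_ge_atTop 1] with N hσN hmN hN
  exact (global_ratio_eq hN hmN ((div_pos_iff_of_pos_right (by positivity)).1 hσN)).symm

/-- If `m(N)/N → 1/(e^{ε/2}+1)`, then the ratio of the global expected error of BRR,
`Q_g^BRR(N) = (1/N)·Σ_{k=1}^N Q_BRR(k,N,m(N))`, to that of GRR,
`Q_g^GRR(N) = (1/N)·Σ_{k=1}^N Q_GRR(k,N)`, tends to
`(7·e^{ε/2} + 9)/(4·(e^{ε/2} + 1)²)` as `N → ∞`. -/
theorem brr_grr_global_ratio_limit (ε : ℝ) (hε : 0 < ε) (m : ℕ → ℕ)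
    (hm : ∀ N, 1 ≤ N → 1 ≤ m N ∧ m N ≤ N)
    (hlim : Tendsto (fun N : ℕ => (m N : ℝ) / (N : ℝ)) atTop
      (nhds (1 / (Real.exp (ε / 2) + 1)))) :
    Tendsto (fun N : ℕ =>
        ((1 / (N : ℝ)) * ∑ k ∈ Finset.Icc 1 N, QBRR ε k N (m N))
          / ((1 / (N : ℝ)) * ∑ k ∈ Finset.Icc 1 N, QGRR ε k N))
      atTop (nhds ((7 * Real.exp (ε / 2) + 9) / (4 * (Real.exp (ε / 2) + 1) ^ 2))) :=
  brr_grr_global_ratio_limit_general ε m hm hlim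
end

section
/- Let N ≥ 2 be an even integer and let ε be real. Define λ_j = ⌊j/2⌋ for 1 ≤ j ≤ N − 1 and λ_N = N/2. Then for every odd integer i with 1 ≤ i ≤ N − 1: e^ε·Σ_{j=1}^{i−1} (λ_i − λ_j) + Σ_{j=i+1}^{N} (λ_i − λ_j) = ((e^ε − 1)/4)·i² + ((N − (e^ε − 1))/2)·i + ((e^ε − 1) − N² − 2N)/4. -/
/-!
Write `i = 2m + 1` and `N = 2k`. Since `N` is even, `λ_N = N/2 = ⌊N/2⌋`, so `λ_j = ⌊j/2⌋` on all
of `1, …, N`, and both sums reduce to partial sums of `⌊j/2⌋`, which are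
`∑_{j=1}^{n} ⌊j/2⌋ = ⌊n/2⌋ ⌊(n+1)/2⌋`. This gives `m²` for the left sum and `-(k - m)²` for the
right one, and the claimed quadratic in `i` is `e^ε m² - (k - m)²` rewritten in terms of `i` and `N`.
-/

open Finset

theorem Int.floor_natCast_div_two (j : ℕ) : ⌊(j : ℝ) / 2⌋ = ((j / 2 : ℕ) : ℤ) := by
  simpa using Int.floor_div_natCast (j : ℝ) 2

theorem Nat.sum_Ioc_zero_div_two (n : ℕ) : ∑ j ∈ Ioc 0 n, j / 2 = n / 2 * ((n + 1) / 2) := by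
  induction n with
  | zero => rfl
  | succ n ih =>
    rw [sum_Ioc_succ_top (Nat.zero_le n), ih]
    rcases Nat.even_or_odd' n with ⟨t, rfl | rfl⟩
    · rw [show 2 * t / 2 = t by omega, show (2 * t + 1) / 2 = t by omega,
        show (2 * t + 1 + 1) / 2 = t + 1 by omega]
      ring
    · rw [show (2 * t + 1) / 2 = t by omega, show (2 * t + 1 + 1) / 2 = t + 1 by omega,
        show (2 * t + 1 + 1 + 1) / 2 = t + 1 by omega]
      ring

theorem sum_Ioc_const_sub_div_two (c : ℝ) {a b : ℕ} (hab : a ≤ b) :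
    ∑ j ∈ Ioc a b, (c - ((j / 2 : ℕ) : ℝ))
      = ((b : ℝ) - a) * c
          - (((b / 2 * ((b + 1) / 2) : ℕ) : ℝ) - ((a / 2 * ((a + 1) / 2) : ℕ) : ℝ)) := by
  have hsplit := sum_Ioc_consecutive (fun j => j / 2) (Nat.zero_le a) hab
  rw [Nat.sum_Ioc_zero_div_two, Nat.sum_Ioc_zero_div_two] at hsplit
  rw [sum_sub_distrib, sum_const, Nat.card_Ioc, nsmul_eq_mul, Nat.cast_sub hab, ← Nat.cast_sum,
    ← hsplit]
  push_cast
  ring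

theorem sum_Ioc_zero_two_mul_const_sub_div_two (m : ℕ) :
    ∑ j ∈ Ioc 0 (2 * m), ((m : ℝ) - ((j / 2 : ℕ) : ℝ)) = (m : ℝ) ^ 2 := by
  rw [sum_Ioc_const_sub_div_two _ (Nat.zero_le _), show 2 * m / 2 = m by omega,
    show (2 * m + 1) / 2 = m by omega]
  push_cast
  ring

theorem sum_Ioc_two_mul_add_one_const_sub_div_two {m k : ℕ} (hmk : m < k) :
    ∑ j ∈ Ioc (2 * m + 1) (2 * k), ((m : ℝ) - ((j / 2 : ℕ) : ℝ)) = -((k : ℝ) - m) ^ 2 := by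
  rw [sum_Ioc_const_sub_div_two _ (by omega), show 2 * k / 2 = k by omega,
    show (2 * k + 1) / 2 = k by omega, show (2 * m + 1) / 2 = m by omega,
    show (2 * m + 1 + 1) / 2 = m + 1 by omega]
  push_cast
  ring

theorem brr_middle_point_derivative_numerator_even_general (ε : ℝ) (N : ℕ)
    (hNeven : Even N) (lam : ℕ → ℝ)
    (hlam : ∀ j, 1 ≤ j → j ≤ N - 1 → lam j = ((⌊(j : ℝ) / 2⌋ : ℤ) : ℝ))
    (hlamN : lam N = (N : ℝ) / 2)
    (i : ℕ) (hodd : Odd i) (hiN : i ≤ N - 1) :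
    Real.exp ε * (∑ j ∈ Finset.Icc 1 (i - 1), (lam i - lam j))
        + (∑ j ∈ Finset.Icc (i + 1) N, (lam i - lam j))
      = ((Real.exp ε - 1) / 4) * (i : ℝ) ^ 2
          + (((N : ℝ) - (Real.exp ε - 1)) / 2) * (i : ℝ)
          + ((Real.exp ε - 1) - (N : ℝ) ^ 2 - 2 * (N : ℝ)) / 4 := by
  obtain ⟨m, rfl⟩ := hodd
  obtain ⟨k, rfl⟩ := hNeven.two_dvd
  have hlam_half : ∀ j, 1 ≤ j → j ≤ 2 * k → lam j = ((j / 2 : ℕ) : ℝ) := by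
    intro j hj1 hjN
    rcases Nat.lt_or_eq_of_le hjN with hj | rfl
    · rw [hlam j hj1 (by omega), Int.floor_natCast_div_two, Int.cast_natCast]
    · rw [hlamN, Nat.mul_div_cancel_left k two_pos]
      push_cast
      ring
  have hlam_i : lam (2 * m + 1) = m := by
    rw [hlam_half _ le_add_self (by omega), show (2 * m + 1) / 2 = m by omega]
  have hsum_Ioc : ∀ {a b}, b ≤ 2 * k → ∑ j ∈ Ioc a b, (lam (2 * m + 1) - lam j)
      = ∑ j ∈ Ioc a b, ((m : ℝ) - ((j / 2 : ℕ) : ℝ)) := fun hb => sum_congr rfl fun j hj => by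
    rw [mem_Ioc] at hj
    rw [hlam_i, hlam_half j (by omega) (by omega)]
  rw [show Icc 1 (2 * m + 1 - 1) = Ioc 0 (2 * m) by ext; simp only [mem_Icc, mem_Ioc]; omega,
    show Icc (2 * m + 1 + 1) (2 * k) = Ioc (2 * m + 1) (2 * k) by
      ext; simp only [mem_Icc, mem_Ioc]; omega,
    hsum_Ioc (by omega), hsum_Ioc le_rfl, sum_Ioc_zero_two_mul_const_sub_div_two,
    sum_Ioc_two_mul_add_one_const_sub_div_two (by omega)]
  push_cast
  ring

/-- For the middle point of an even-sized equidistant domain, with sorted losses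
`λ_j = ⌊j/2⌋` for `1 ≤ j ≤ N − 1` and `λ_N = N/2`, for every odd `1 ≤ i ≤ N − 1`:
`e^ε·Σ_{j=1}^{i−1} (λ_i − λ_j) + Σ_{j=i+1}^{N} (λ_i − λ_j)
  = ((e^ε − 1)/4)·i² + ((N − (e^ε − 1))/2)·i + ((e^ε − 1) − N² − 2N)/4`. -/
theorem brr_middle_point_derivative_numerator_even (ε : ℝ) (N : ℕ) (hN : 2 ≤ N)
    (hNeven : Even N) (lam : ℕ → ℝ)
    (hlam : ∀ j, 1 ≤ j → j ≤ N - 1 → lam j = ((⌊(j : ℝ) / 2⌋ : ℤ) : ℝ))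
    (hlamN : lam N = (N : ℝ) / 2)
    (i : ℕ) (hodd : Odd i) (hi1 : 1 ≤ i) (hiN : i ≤ N - 1) :
    Real.exp ε * (∑ j ∈ Finset.Icc 1 (i - 1), (lam i - lam j))
        + (∑ j ∈ Finset.Icc (i + 1) N, (lam i - lam j))
      = ((Real.exp ε - 1) / 4) * (i : ℝ) ^ 2
          + (((N : ℝ) - (Real.exp ε - 1)) / 2) * (i : ℝ)
          + ((Real.exp ε - 1) - (N : ℝ) ^ 2 - 2 * (N : ℝ)) / 4 :=
  brr_middle_point_derivative_numerator_even_general ε N hNeven lam hlam hlamN i hodd hiN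
end

section
/- For every real ε > 0 and every real N > 0, the quadratic g(x) = ((e^ε − 1)/4)·x² + ((N − (e^ε − 1))/2)·x + ((e^ε − 1) − N² − 2N)/4 has discriminant ((N − (e^ε−1))/2)² − (e^ε−1)·((e^ε−1) − N² − 2N)/4 = e^ε·N²/4, and x₀ = N/(e^{ε/2} + 1) + 1 is its larger root, i.e., g(x₀) = 0 and g(x) > 0 for all x > x₀. -/
/-!
With `s = e^{ε/2}` we have `e^ε − 1 = s² − 1`, and then `4·g(x)` factors as
`((s + 1)(x − 1) − N)·((s − 1)(x − 1) + N)`. The first factor vanishes exactly at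
`x₀ = N/(s + 1) + 1`, and beyond `x₀` both factors are positive as soon as `s > 1` and `N ≥ 0`.
-/

open Real

/-- The quadratic `g` with `e^ε − 1` written as a parameter `c`. -/
noncomputable def brrMiddleQuadratic (c N x : ℝ) : ℝ :=
  (c / 4) * x ^ 2 + ((N - c) / 2) * x + (c - N ^ 2 - 2 * N) / 4

theorem discrim_brrMiddleQuadratic (c N : ℝ) :
    discrim (c / 4) ((N - c) / 2) ((c - N ^ 2 - 2 * N) / 4) = (c + 1) * N ^ 2 / 4 := by
  unfold discrim
  ring

theorem four_mul_brrMiddleQuadratic_sq_sub_one (s N x : ℝ) :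
    4 * brrMiddleQuadratic (s ^ 2 - 1) N x = ((s + 1) * (x - 1) - N) * ((s - 1) * (x - 1) + N) := by
  unfold brrMiddleQuadratic
  ring

theorem brrMiddleQuadratic_sq_sub_one_root {s : ℝ} (N : ℝ) (hs : s + 1 ≠ 0) :
    brrMiddleQuadratic (s ^ 2 - 1) N (N / (s + 1) + 1) = 0 := by
  have h := four_mul_brrMiddleQuadratic_sq_sub_one s N (N / (s + 1) + 1)
  rw [add_sub_cancel_right, mul_div_cancel₀ N hs, sub_self, zero_mul] at h
  linarith

theorem brrMiddleQuadratic_sq_sub_one_pos {s N x : ℝ} (hs : 1 < s) (hN : 0 ≤ N)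
    (hx : N / (s + 1) + 1 < x) : 0 < brrMiddleQuadratic (s ^ 2 - 1) N x := by
  have hs₀ : 0 < s + 1 := by linarith
  have hx₁ : N < (s + 1) * (x - 1) := by
    rw [← div_lt_iff₀' hs₀]
    linarith
  have hx₀ : 0 < x - 1 := by linarith [div_nonneg hN hs₀.le]
  have h := four_mul_brrMiddleQuadratic_sq_sub_one s N x
  have hpos : 0 < ((s + 1) * (x - 1) - N) * ((s - 1) * (x - 1) + N) :=
    mul_pos (by linarith) (by nlinarith)
  linarith

theorem exp_eq_exp_half_sq (ε : ℝ) : exp ε = exp (ε / 2) ^ 2 := by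
  rw [exp_half, sq_sqrt (exp_pos ε).le]

/-- The middle-point quadratic
`g(x) = ((e^ε − 1)/4)·x² + ((N − (e^ε − 1))/2)·x + ((e^ε − 1) − N² − 2N)/4`
has discriminant `((N − (e^ε−1))/2)² − (e^ε−1)·((e^ε−1) − N² − 2N)/4 = e^ε·N²/4`,
and `x₀ = N/(e^{ε/2} + 1) + 1` is its larger root: `g(x₀) = 0` and `g(x) > 0`
for all `x > x₀`. -/
theorem brr_middle_quadratic_root (ε N : ℝ) (hε : 0 < ε) (hN : 0 < N)
    (g : ℝ → ℝ)
    (hg : ∀ x, g x = ((Real.exp ε - 1) / 4) * x ^ 2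
        + ((N - (Real.exp ε - 1)) / 2) * x
        + ((Real.exp ε - 1) - N ^ 2 - 2 * N) / 4) :
    (((N - (Real.exp ε - 1)) / 2) ^ 2
        - (Real.exp ε - 1) * ((Real.exp ε - 1) - N ^ 2 - 2 * N) / 4
      = Real.exp ε * N ^ 2 / 4) ∧
    g (N / (Real.exp (ε / 2) + 1) + 1) = 0 ∧
    ∀ x, N / (Real.exp (ε / 2) + 1) + 1 < x → 0 < g x := by
  have hg' : g = brrMiddleQuadratic (exp (ε / 2) ^ 2 - 1) N := by
    rw [← exp_eq_exp_half_sq]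
    exact funext hg
  have hs : 1 < exp (ε / 2) := one_lt_exp_iff.mpr (half_pos hε)
  refine ⟨?_, ?_, fun x hx => ?_⟩
  · have h := discrim_brrMiddleQuadratic (exp ε - 1) N
    rw [discrim, sub_add_cancel] at h
    linarith
  · rw [hg']
    exact brrMiddleQuadratic_sq_sub_one_root N (by positivity)
  · rw [hg']
    exact brrMiddleQuadratic_sq_sub_one_pos hs hN.le hx
end

section
/- Given a privacy budget ε > 0, an integer N ≥ 2, and real quality losses 0 ≤ λ₁ ≤ λ₂ ≤ ⋯ ≤ λ_N, define for 1 ≤ m ≤ N the bipartite expected error Q(m) = (e^ε·Σ_{i=1}^m λ_i + Σ_{i=m+1}^N λ_i)/(m·e^ε + N − m). Then for every m with 1 ≤ m ≤ N − 1: Q(m+1) ≤ Q(m) if and only if λ_{m+1} ≤ Q(m), and Q(m+1) < Q(m) if and only if λ_{m+1} < Q(m). -/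
/-!
Passing from `m` to `m + 1` moves `λ_{m+1}` from the weight-`1` block to the weight-`e^ε` block,
so with `c = e^ε - 1 > 0` the numerator of `Q` grows by `c λ_{m+1}` and the denominator by `c`.
Hence `Q (m + 1)` is the mediant of `Q m` and `λ_{m+1}`, and it lies below `Q m` exactly when
`λ_{m+1}` does.
-/

open Finset

section Mediant

variable {α : Type*} [Field α] [LinearOrder α] [IsStrictOrderedRing α] {a b c x : α}

theorem add_mul_div_add_le_div_iff (hb : 0 < b) (hc : 0 < c) :
    (a + c * x) / (b + c) ≤ a / b ↔ x ≤ a / b := by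
  have key : (a + c * x) * b ≤ a * (b + c) ↔ c * (x * b) ≤ c * a := by
    constructor <;> intro h <;> linarith
  rw [div_le_div_iff₀ (add_pos hb hc) hb, le_div_iff₀ hb, key, mul_le_mul_iff_right₀ hc]

theorem add_mul_div_add_lt_div_iff (hb : 0 < b) (hc : 0 < c) :
    (a + c * x) / (b + c) < a / b ↔ x < a / b := by
  have key : (a + c * x) * b < a * (b + c) ↔ c * (x * b) < c * a := by
    constructor <;> intro h <;> linarith
  rw [div_lt_div_iff₀ (add_pos hb hc) hb, lt_div_iff₀ hb, key, mul_lt_mul_iff_right₀ hc]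

end Mediant

theorem weighted_split_sum_succ (w : ℝ) (lam : ℕ → ℝ) {m N : ℕ} (h : m + 1 ≤ N) :
    w * ∑ i ∈ Icc 1 (m + 1), lam i + ∑ i ∈ Icc (m + 1 + 1) N, lam i =
      (w * ∑ i ∈ Icc 1 m, lam i + ∑ i ∈ Icc (m + 1) N, lam i) + (w - 1) * lam (m + 1) := by
  rw [sum_Icc_succ_top (by omega), ← add_sum_Ioc_eq_sum_Icc h, ← Icc_add_one_left_eq_Ioc]
  ring

theorem brr_step_sign_criterion_general (ε : ℝ) (hε : 0 < ε) (N : ℕ) (hN : 2 ≤ N)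
    (lam : ℕ → ℝ)
    (Q : ℕ → ℝ)
    (hQ : ∀ m, Q m =
      (Real.exp ε * ∑ i ∈ Finset.Icc 1 m, lam i + ∑ i ∈ Finset.Icc (m + 1) N, lam i)
        / (m * Real.exp ε + N - m))
    (m : ℕ) (hmN : m ≤ N - 1) :
    (Q (m + 1) ≤ Q m ↔ lam (m + 1) ≤ Q m) ∧
    (Q (m + 1) < Q m ↔ lam (m + 1) < Q m) := by
  have hstep : m + 1 ≤ N := by omega
  have hc : 0 < Real.exp ε - 1 := sub_pos.mpr (Real.one_lt_exp_iff.mpr hε)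
  have hD : 0 < (m * Real.exp ε + N - m : ℝ) := by
    have : (m : ℝ) + 1 ≤ N := by exact_mod_cast hstep
    linarith [mul_nonneg m.cast_nonneg (Real.exp_pos ε).le]
  have hQ_succ : Q (m + 1) =
      ((Real.exp ε * ∑ i ∈ Icc 1 m, lam i + ∑ i ∈ Icc (m + 1) N, lam i)
        + (Real.exp ε - 1) * lam (m + 1)) / ((m * Real.exp ε + N - m) + (Real.exp ε - 1)) := by
    rw [hQ, weighted_split_sum_succ _ _ hstep]
    push_cast
    ring
  rw [hQ_succ, hQ m]
  exact ⟨add_mul_div_add_le_div_iff hD hc, add_mul_div_add_lt_div_iff hD hc⟩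

/-- For the bipartite expected error
`Q(m) = (e^ε·Σ_{i≤m} λ_i + Σ_{i>m} λ_i)/(m·e^ε + N − m)` with sorted nonnegative losses,
for every `1 ≤ m ≤ N − 1`: `Q(m+1) ≤ Q(m) ↔ λ_{m+1} ≤ Q(m)`, and
`Q(m+1) < Q(m) ↔ λ_{m+1} < Q(m)`. -/
theorem brr_step_sign_criterion (ε : ℝ) (hε : 0 < ε) (N : ℕ) (hN : 2 ≤ N)
    (lam : ℕ → ℝ) (h0 : 0 ≤ lam 1)
    (hmono : ∀ i, 1 ≤ i → i < N → lam i ≤ lam (i + 1))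
    (Q : ℕ → ℝ)
    (hQ : ∀ m, Q m =
      (Real.exp ε * ∑ i ∈ Finset.Icc 1 m, lam i + ∑ i ∈ Finset.Icc (m + 1) N, lam i)
        / (m * Real.exp ε + N - m))
    (m : ℕ) (hm1 : 1 ≤ m) (hmN : m ≤ N - 1) :
    (Q (m + 1) ≤ Q m ↔ lam (m + 1) ≤ Q m) ∧
    (Q (m + 1) < Q m ↔ lam (m + 1) < Q m) :=
  brr_step_sign_criterion_general ε hε N hN lam Q hQ m hmN
end
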